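/- arXiv:1812.11789 — 6 statements merged into one kernel-verified Lean document; each statement's English description precedes it below -/
import Mathlib

section
/- Let K be a field of characteristic zero, m, n, d natural numbers with 0 ≤ d < min(m,n), and define y(x) = ∑_{j=0}^{d} C(n-d+j-1, j) · C(m-j-1, d-j) · (x-α)^j · (x-β)^(d-j) in K[x], for α, β ∈ K. Then y satisfies the differential equation (x-α)(x-β)·y'' + (α(n-1) + β(m-1) - (m+n-2)x)·y' + d(m+n-d-1)·y = 0. -/
/-!
Write `u = X - α` and `v = X - β`. The operator sends `u^j v^(d-j)` to a combination of itself
and its neighbours `u^(j-1) v^(d-j+1)`, `u^(j+1) v^(d-j-1)`, with weights `j(m-j)` and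
`(d-j)(n-d+j)`; the Euler identity `u (u^j)' = j u^j` gives this without case distinctions.
The coefficients `a_j` of `y` satisfy the balance relation
`a_(j+1) (j+1)(m-j-1) = a_j (d-j)(n-d+j)`, so the neighbour terms cancel against each other.
-/

open Polynomial

theorem Finset.sum_range_smul_sub_pred_add_smul_sub_succ_eq_zero {R V : Type*} [Semiring R]
    [AddCommGroup V] [Module R V] (g : ℕ → V) (p q : ℕ → R) (d : ℕ) (hp : p 0 = 0)
    (hq : q d = 0) (hpq : ∀ j < d, p (j + 1) = q j) :
    ∑ j ∈ range (d + 1), (p j • (g j - g (j - 1)) + q j • (g j - g (j + 1))) = 0 := by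
  rw [sum_add_distrib, sum_range_succ', sum_range_succ, hp, hq]
  simp only [zero_smul, add_zero, add_tsub_cancel_right, ← sum_add_distrib]
  refine sum_eq_zero fun j hj => ?_
  rw [hpq j (mem_range.mp hj), ← smul_add]
  simp

theorem Nat.cast_choose_mul_choose_succ {R : Type*} [CommRing R] {m n d j : ℕ} (hm : d < m)
    (hn : d < n) (hj : j < d) :
    ((n - d + (j + 1) - 1).choose (j + 1) * (m - (j + 1) - 1).choose (d - (j + 1)) : R) *
        (((j : R) + 1) * (m - (j + 1))) =
      ((n - d + j - 1).choose j * (m - j - 1).choose (d - j) : R) * ((d - j) * (n - d + j)) := by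
  obtain ⟨a, ha⟩ : ∃ a, n - d + j = a + 1 := ⟨n - d + j - 1, by omega⟩
  obtain ⟨b, hb⟩ : ∃ b, m - j - 1 = b + 1 := ⟨m - j - 2, by omega⟩
  obtain ⟨r, hr⟩ : ∃ r, d - j = r + 1 := ⟨d - j - 1, by omega⟩
  rw [show n - d + (j + 1) - 1 = a + 1 by omega, show n - d + j - 1 = a by omega,
    show m - (j + 1) - 1 = b by omega, hb, show d - (j + 1) = r by omega, hr]
  obtain rfl : m = b + j + 2 := by omega
  obtain rfl : d = r + j + 1 := by omega
  obtain rfl : n = a + r + 2 := by omega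
  have ha' := congrArg (Nat.cast : ℕ → R) (add_one_mul_choose_eq a j)
  have hb' := congrArg (Nat.cast : ℕ → R) (add_one_mul_choose_eq b r)
  push_cast at ha' hb' ⊢
  linear_combination ((a : R) + 1) * a.choose j * hb' - ((b : R) + 1) * b.choose r * ha'

namespace Polynomial

variable {R : Type*} [CommRing R]

theorem X_sub_C_mul_derivative_X_sub_C_pow (c : R) (n : ℕ) :
    (X - C c) * derivative ((X - C c) ^ n) = C (n : R) * (X - C c) ^ n := by
  rw [derivative_X_sub_C_pow]
  rcases n with _ | n
  · simp
  · rw [add_tsub_cancel_right, pow_succ]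
    ring

theorem X_sub_C_mul_derivative_derivative_X_sub_C_pow (c : R) (n : ℕ) :
    (X - C c) * derivative (derivative ((X - C c) ^ n)) =
      (C (n : R) - 1) * derivative ((X - C c) ^ n) := by
  have h := congrArg derivative (X_sub_C_mul_derivative_X_sub_C_pow c n)
  rw [derivative_mul, derivative_X_sub_C, derivative_C_mul] at h
  linear_combination h

noncomputable def jacobiOperator (α β M N c : R) : R[X] →ₗ[R] R[X] where
  toFun p := (X - C α) * (X - C β) * derivative (derivative p) +
    (C (α * (N - 1) + β * (M - 1)) - C (M + N - 2) * X) * derivative p + C c * p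
  map_add' p q := by
    simp only [derivative_add]
    ring
  map_smul' a p := by
    simp only [smul_eq_C_mul, derivative_C_mul, RingHom.id_apply]
    ring

/-- At `j = 0` the term `(X - C α) ^ (j - 1)` is junk, but its weight `j * (M - j)` vanishes. -/
theorem jacobiOperator_X_sub_C_pow_mul_X_sub_C_pow (α β M N : R) {j d : ℕ} (hj : j ≤ d) :
    jacobiOperator α β M N (d * (M + N - d - 1)) ((X - C α) ^ j * (X - C β) ^ (d - j)) =
      ((j : R) * (M - j)) • ((X - C α) ^ j * (X - C β) ^ (d - j) -
          (X - C α) ^ (j - 1) * (X - C β) ^ (d - (j - 1))) +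
        (((d : R) - j) * (N - d + j)) • ((X - C α) ^ j * (X - C β) ^ (d - j) -
          (X - C α) ^ (j + 1) * (X - C β) ^ (d - (j + 1))) := by
  have lower : (X - C β) ^ (d - (j - 1)) * C (j : R) =
      (X - C β) ^ (d - j) * (X - C β) * C (j : R) := by
    rcases j with _ | j
    · simp
    · rw [← pow_succ, add_tsub_cancel_right, show d - (j + 1) + 1 = d - j by omega]
  have eu := X_sub_C_mul_derivative_X_sub_C_pow α j
  have ev := X_sub_C_mul_derivative_X_sub_C_pow β (d - j)
  have eu2 := X_sub_C_mul_derivative_derivative_X_sub_C_pow α j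
  have ev2 := X_sub_C_mul_derivative_derivative_X_sub_C_pow β (d - j)
  have du := derivative_X_sub_C_pow α j
  have dv := derivative_X_sub_C_pow β (d - j)
  rw [Nat.sub_sub] at dv
  rw [Nat.cast_sub hj] at ev ev2 dv
  simp only [jacobiOperator, LinearMap.coe_mk, AddHom.coe_mk, smul_eq_C_mul, derivative_mul,
    derivative_add]
  simp only [map_sub, map_mul, map_add, map_natCast, map_one, map_ofNat] at *
  linear_combination ((X - C β) * (X - C β) ^ (d - j)) * eu2 + ((X - C α) * (X - C α) ^ j) * ev2
    + (2 * (X - C β) * derivative ((X - C β) ^ (d - j)) - (C N - 1) * (X - C β) ^ (d - j)) * eu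
    + (2 * (j : R[X]) * (X - C α) ^ j - (C M - 1) * (X - C α) ^ j) * ev
    + ((j : R[X]) - C M) * (X - C β) * (X - C β) ^ (d - j) * du
    + ((d : R[X]) - j - C N) * (X - C α) * (X - C α) ^ j * dv
    - ((j : R[X]) - C M) * (X - C α) ^ (j - 1) * lower

end Polynomial

theorem jacobi_combination_satisfies_ode_general {K : Type*} [Field K]
    (m n d : ℕ) (hm : d < m) (hn : d < n) (α β : K)
    (y : Polynomial K)
    (hy : y = ∑ j ∈ Finset.range (d + 1),
      C ((Nat.choose (n - d + j - 1) j : K) * (Nat.choose (m - j - 1) (d - j) : K)) *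
        (X - C α) ^ j * (X - C β) ^ (d - j)) :
    (X - C α) * (X - C β) * derivative (derivative y) +
      (C (α * ((n : K) - 1) + β * ((m : K) - 1)) - C ((m : K) + (n : K) - 2) * X) *
        derivative y +
      C ((d : K) * ((m : K) + (n : K) - (d : K) - 1)) * y = 0 := by
  subst hy
  change jacobiOperator α β m n (d * (m + n - d - 1)) _ = 0
  simp only [← smul_eq_C_mul, smul_mul_assoc, map_sum, map_smul]
  rw [Finset.sum_congr rfl fun j hj => congrArg (_ • ·) <|
    jacobiOperator_X_sub_C_pow_mul_X_sub_C_pow α β m n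
      (Nat.lt_add_one_iff.mp (Finset.mem_range.mp hj))]
  simp only [smul_add, smul_smul]
  exact Finset.sum_range_smul_sub_pred_add_smul_sub_succ_eq_zero _ _ _ d (by simp) (by simp)
    fun j hj => by push_cast; exact Nat.cast_choose_mul_choose_succ hm hn hj

theorem jacobi_combination_satisfies_ode {K : Type*} [Field K] [CharZero K]
    (m n d : ℕ) (hm : d < m) (hn : d < n) (α β : K)
    (y : Polynomial K)
    (hy : y = ∑ j ∈ Finset.range (d + 1),
      C ((Nat.choose (n - d + j - 1) j : K) * (Nat.choose (m - j - 1) (d - j) : K)) *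
        (X - C α) ^ j * (X - C β) ^ (d - j)) :
    (X - C α) * (X - C β) * derivative (derivative y) +
      (C (α * ((n : K) - 1) + β * ((m : K) - 1)) - C ((m : K) + (n : K) - 2) * X) *
        derivative y +
      C ((d : K) * ((m : K) + (n : K) - (d : K) - 1)) * y = 0 :=
  jacobi_combination_satisfies_ode_general m n d hm hn α β y hy
end

section
/- Let K be a field, f, g ∈ K[x] of degrees m and n respectively, and 0 ≤ d < min(m,n). Assume Sres_d(f,g) is nonzero of degree exactly d. If F, G ∈ K[x] with deg F < n-d and deg G < m-d are such that h = F·f + G·g is a nonzero polynomial of degree at most d, then there exists λ ∈ K, λ ≠ 0, with h = λ · Sres_d(f,g). -/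
open Polynomial

/-- The order-`d` polynomial subresultant of `f` (of nominal degree `m`) and `g`
(of nominal degree `n`): the determinant of the `(m+n-2d) × (m+n-2d)` matrix whose
first `n-d` rows hold the coefficients of `f` (with last column `x^(n-d-1-i)·f`) and
whose last `m-d` rows hold the coefficients of `g` (with last column `x^(m-d-1-i)·g`). -/
noncomputable def Sres {R : Type*} [CommRing R] (m n d : ℕ) (f g : Polynomial R) :
    Polynomial R :=
  (Matrix.of (fun i j : Fin (m + n - 2 * d) =>
    if (i : ℕ) < n - d then
      if (j : ℕ) = m + n - 2 * d - 1 then X ^ (n - d - 1 - (i : ℕ)) * f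
      else if (j : ℕ) ≤ m + (i : ℕ) then C (f.coeff (m + (i : ℕ) - (j : ℕ))) else 0
    else
      if (j : ℕ) = m + n - 2 * d - 1 then X ^ (m - d - 1 - ((i : ℕ) - (n - d))) * g
      else if (j : ℕ) ≤ n + ((i : ℕ) - (n - d)) then
        C (g.coeff (n + ((i : ℕ) - (n - d)) - (j : ℕ))) else 0)).det

/-!
Let `M` be the subresultant matrix and `v` the row vector of the coefficients of `F` and `G`.
Every column of `M` but the last lists the coefficients of the last column in one degree above
`d`, where `h` vanishes, so `v M = h e`, with `e` the last unit vector. Multiplying by `adj M`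
gives `h · adj(M)[last, i] = det M · v[i]`, and these cofactors are constants because the last
column is the only non-constant one. Taking `i` with `v[i] ≠ 0` gives `h = λ · Sres_d(f, g)`.
-/

open Finset
open scoped Matrix

namespace Matrix

variable {ι R : Type*} [Fintype ι] [CommRing R]

theorem vecMul_apply_eq_C_coeff {M : Matrix ι ι R[X]} {j j₀ : ι} {k : ℕ}
    (hM : ∀ i, M i j = C ((M i j₀).coeff k)) (v : ι → R) :
    ((fun i => C (v i)) ᵥ* M) j = C ((((fun i => C (v i)) ᵥ* M) j₀).coeff k) := by
  simp only [vecMul, dotProduct, hM, finsetSum_coeff, coeff_C_mul, map_sum, map_mul]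

variable [DecidableEq ι]

theorem adjugate_apply_eq_det_updateCol (A : Matrix ι ι R) (i j : ι) :
    adjugate A j i = (A.updateCol j (Pi.single i 1)).det := by
  rw [← transpose_apply (adjugate A), adjugate_transpose, adjugate_apply, updateRow_transpose,
    det_transpose]

/-- The cofactors along column `j₀` do not involve that column. -/
theorem exists_adjugate_apply_eq_C {M : Matrix ι ι R[X]} {j₀ : ι}
    (hM : ∀ i j, j ≠ j₀ → ∃ c, M i j = C c) (i : ι) : ∃ c, adjugate M j₀ i = C c := by
  have hconst : ∀ k j, ∃ c, M.updateCol j₀ (Pi.single i 1) k j = C c := by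
    intro k j
    rcases eq_or_ne j j₀ with rfl | hj
    · rw [updateCol_self, Pi.single_apply]
      split_ifs
      exacts [⟨1, C_1.symm⟩, ⟨0, C_0.symm⟩]
    · rw [updateCol_ne hj]
      exact hM k j hj
  choose N hN using hconst
  refine ⟨(of N).det, ?_⟩
  rw [adjugate_apply_eq_det_updateCol, RingHom.map_det]
  congr
  ext k j : 1
  exact hN k j

theorem mul_adjugate_apply_of_vecMul_eq_single {M : Matrix ι ι R} {v : ι → R} {j₀ : ι} {h : R}
    (hv : v ᵥ* M = Pi.single j₀ h) (i : ι) : h * adjugate M j₀ i = M.det * v i := by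
  have := congrFun (congrArg (· ᵥ* adjugate M) hv) i
  simpa [vecMul_vecMul, mul_adjugate, vecMul_smul] using this.symm

/-- Cramer's rule along column `j₀`: `h * adjugate M j₀ i = det M * C (v i)`, and these cofactors
are constants. -/
theorem exists_eq_C_mul_det_of_vecMul_eq_single {K : Type*} [Field K] {M : Matrix ι ι K[X]}
    {j₀ : ι} (hM : ∀ i j, j ≠ j₀ → ∃ c, M i j = C c) {v : ι → K} {h : K[X]}
    (hv : (fun i => C (v i)) ᵥ* M = Pi.single j₀ h) (hh : h ≠ 0) (hdet : M.det ≠ 0) :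
    ∃ lam : K, lam ≠ 0 ∧ h = C lam * M.det := by
  obtain ⟨i, hi⟩ : ∃ i, v i ≠ 0 := by
    by_contra! hv0
    have hzero : (fun i => C (v i)) = 0 := funext fun i => by simp [hv0]
    exact hh (by simpa [hzero] using (congrFun hv j₀).symm)
  obtain ⟨c, hc⟩ := exists_adjugate_apply_eq_C hM i
  have key := mul_adjugate_apply_of_vecMul_eq_single hv i
  rw [hc] at key
  have hc0 : c ≠ 0 := by
    rintro rfl
    rw [C_0, mul_zero, eq_comm, mul_eq_zero, C_eq_zero] at key
    tauto
  refine ⟨v i / c, div_ne_zero hi hc0, mul_right_cancel₀ (C_ne_zero.2 hc0) ?_⟩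
  rw [key, mul_comm (C _), mul_assoc, ← C_mul, div_mul_cancel₀ _ hc0]

end Matrix

theorem Polynomial.sum_range_C_coeff_mul_X_pow_reflect {R : Type*} [Semiring R] {p : R[X]}
    {N : ℕ} (hp : p.degree < N) :
    ∑ k ∈ range N, C (p.coeff (N - 1 - k)) * X ^ (N - 1 - k) = p := by
  rcases eq_or_ne p 0 with rfl | hp0
  · simp
  rw [sum_range_reflect (fun k => C (p.coeff k) * X ^ k) N]
  exact (p.as_sum_range_C_mul_X_pow' ((natDegree_lt_iff_degree_lt hp0).2 hp)).symm

section Subresultant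

variable {R : Type*} [CommRing R] (m n d : ℕ)

noncomputable def sresEntry (f g : R[X]) (i j : ℕ) : R[X] :=
  if i < n - d then
    if j = m + n - 2 * d - 1 then X ^ (n - d - 1 - i) * f
    else if j ≤ m + i then C (f.coeff (m + i - j)) else 0
  else
    if j = m + n - 2 * d - 1 then X ^ (m - d - 1 - (i - (n - d))) * g
    else if j ≤ n + (i - (n - d)) then C (g.coeff (n + (i - (n - d)) - j)) else 0

/-- The matrix in the definition of `Sres`, so that `Sres m n d f g` unfolds to
`(sresMatrix m n d f g).det`. -/
noncomputable def sresMatrix (f g : R[X]) :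
    Matrix (Fin (m + n - 2 * d)) (Fin (m + n - 2 * d)) R[X] :=
  Matrix.of fun i j => sresEntry m n d f g i j

/-- The coordinates of `(F, G)` in the basis `X ^ (n-d-1) * f, …, f, X ^ (m-d-1) * g, …, g`
indexing the rows of `sresMatrix m n d f g`. -/
def sresCoords (F G : R[X]) (k : ℕ) : R :=
  if k < n - d then F.coeff (n - d - 1 - k) else G.coeff (m - d - 1 - (k - (n - d)))

variable {m n d}

theorem sresMatrix_apply_eq_C_coeff (hdn : d ≤ n) (f g : R[X])
    {i j j₀ : Fin (m + n - 2 * d)} (hj₀ : (j₀ : ℕ) = m + n - 2 * d - 1) (hj : j ≠ j₀) :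
    sresMatrix m n d f g i j = C ((sresMatrix m n d f g i j₀).coeff (m + n - d - 1 - j)) := by
  have hj' : (j : ℕ) ≠ j₀ := Fin.val_ne_of_ne hj
  have hi_lt := i.isLt
  have hj_lt := j.isLt
  simp only [sresMatrix, Matrix.of_apply, sresEntry, hj₀]
  split_ifs <;> first | omega | rw [coeff_X_pow_mul']
  all_goals split_ifs <;> first | omega | exact C_0.symm | (congr 2; omega)

theorem vecMul_sresMatrix_apply_last (hdm : d ≤ m) (hdn : d ≤ n) (f g : R[X]) {F G : R[X]}
    (hF : F.degree < (n - d : ℕ)) (hG : G.degree < (m - d : ℕ)) {j₀ : Fin (m + n - 2 * d)}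
    (hj₀ : (j₀ : ℕ) = m + n - 2 * d - 1) :
    ((fun i : Fin (m + n - 2 * d) => C (sresCoords m n d F G i)) ᵥ* sresMatrix m n d f g) j₀ =
      F * f + G * g := by
  have hsplit : range (m + n - 2 * d) = range ((n - d) + (m - d)) := by congr 1; omega
  simp only [Matrix.vecMul, dotProduct, sresMatrix, Matrix.of_apply, hj₀]
  rw [Fin.sum_univ_eq_sum_range (fun k => C (sresCoords m n d F G k) *
    sresEntry m n d f g k (m + n - 2 * d - 1)), hsplit, sum_range_add]
  congr 1
  · conv_rhs => rw [← sum_range_C_coeff_mul_X_pow_reflect hF, sum_mul]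
    refine sum_congr rfl fun k hk => ?_
    simp [sresCoords, sresEntry, mem_range.1 hk, mul_assoc]
  · conv_rhs => rw [← sum_range_C_coeff_mul_X_pow_reflect hG, sum_mul]
    refine sum_congr rfl fun k _ => ?_
    simp [sresCoords, sresEntry, mul_assoc]

end Subresultant

theorem scalar_multiple_of_subresultant_general {K : Type*} [Field K]
    (m n d : ℕ) (hd : d < min m n) (f g : Polynomial K)
    (hS : Sres m n d f g ≠ 0)
    (F G : Polynomial K) (hF : F.degree < (n - d : ℕ)) (hG : G.degree < (m - d : ℕ))
    (h : Polynomial K) (hh : h = F * f + G * g) (hh0 : h ≠ 0) (hhd : h.degree ≤ d) :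
    ∃ lam : K, lam ≠ 0 ∧ h = C lam * Sres m n d f g := by
  obtain ⟨hdm, hdn⟩ := lt_min_iff.mp hd
  set M := sresMatrix m n d f g
  set last : Fin (m + n - 2 * d) := ⟨m + n - 2 * d - 1, by omega⟩
  have hcoeff {i j : Fin (m + n - 2 * d)} (hj : j ≠ last) :
      M i j = C ((M i last).coeff (m + n - d - 1 - j)) :=
    sresMatrix_apply_eq_C_coeff hdn.le f g rfl hj
  have hlast : ((fun i : Fin (m + n - 2 * d) => C (sresCoords m n d F G i)) ᵥ* M) last = h := by
    rw [hh, vecMul_sresMatrix_apply_last hdm.le hdn.le f g hF hG rfl]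
  have hv :
      (fun i : Fin (m + n - 2 * d) => C (sresCoords m n d F G i)) ᵥ* M = Pi.single last h := by
    funext j
    rcases eq_or_ne j last with rfl | hj
    · rw [hlast, Pi.single_eq_same]
    · have hj' : (j : ℕ) < m + n - 2 * d - 1 := lt_of_le_of_ne (Nat.le_sub_one_of_lt j.isLt)
        (Fin.val_ne_of_ne hj)
      rw [Matrix.vecMul_apply_eq_C_coeff (fun i => hcoeff hj), hlast, Pi.single_eq_of_ne hj,
        coeff_eq_zero_of_degree_lt (hhd.trans_lt (by norm_cast; omega)), C_0]
  exact Matrix.exists_eq_C_mul_det_of_vecMul_eq_single (fun i j hj => ⟨_, hcoeff hj⟩) hv hh0 hS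

theorem scalar_multiple_of_subresultant {K : Type*} [Field K]
    (m n d : ℕ) (hd : d < min m n) (f g : Polynomial K)
    (hf : f.natDegree = m) (hg : g.natDegree = n)
    (hS : Sres m n d f g ≠ 0) (hSdeg : (Sres m n d f g).natDegree = d)
    (F G : Polynomial K) (hF : F.degree < (n - d : ℕ)) (hG : G.degree < (m - d : ℕ))
    (h : Polynomial K) (hh : h = F * f + G * g) (hh0 : h ≠ 0) (hhd : h.degree ≤ d) :
    ∃ lam : K, lam ≠ 0 ∧ h = C lam * Sres m n d f g :=
  scalar_multiple_of_subresultant_general m n d hd f g hS F G hF hG h hh hh0 hhd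
end

section
/- Let m, n, d be natural numbers with 0 ≤ d < min(m,n) and consider (x-α)^m, (x-β)^n ∈ ℤ[α,β,x] with α, β indeterminates. Then Sres_d((x-α)^m, (x-β)^n) lies in the subring ℤ[x-α, x-β] of ℤ[α,β,x]. -/
/-!
Let `S = Sres_d((x-α)^m, (x-β)^n) ∈ ℤ[α,β][x]`. Subresultants commute with ring
homomorphisms of the coefficients and, for polynomials of degree at most `m` and `n`, with
translations `x ↦ x + t` of the variable: in Collins' determinant-polynomial form, translating
the rows `x^k f, x^k g` is a unitriangular row operation and translating the coefficient columns
is a unitriangular column operation. Translating by `x` itself sends `(y - α)^m` to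
`(y - (α - x))^m`, so `S(x) = S(0)|_{α ↦ α - x, β ↦ β - x}`, i.e. `S` is `S(0)(-u, -v)` at
`u = x - α`, `v = x - β`.
-/

open Polynomial
open scoped Matrix

theorem sum_fin_rev_eq_sum_range {M : Type*} [AddCommMonoid M] {N D s : ℕ} (g : ℕ → M)
    (hg : ∀ l < s, g l = 0) (hN : N ≤ D + 2) (hs : D + 2 ≤ s + N) :
    ∑ j : Fin N, (if (j : ℕ) = N - 1 then 0 else g (D - j))
      = ∑ l ∈ Finset.range (D + 1), g l := by
  refine Finset.sum_bij_ne_zero (fun j _ _ => D - j) (fun j _ _ => by simp)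
    (fun j₁ _ h₁ j₂ _ h₂ heq => ?_) (fun l hl hgl => ?_) (fun j _ h => ?_)
  · have : (j₁ : ℕ) ≠ N - 1 := fun h => h₁ (if_pos h)
    have : (j₂ : ℕ) ≠ N - 1 := fun h => h₂ (if_pos h)
    exact Fin.ext (by omega)
  · have hsl : s ≤ l := by by_contra h; exact hgl (hg l (by omega))
    have hl := Finset.mem_range.mp hl
    refine ⟨⟨D - l, by omega⟩, Finset.mem_univ _, ?_, by simp only; omega⟩
    dsimp only
    rw [if_neg (by omega), show D - (D - l) = l by omega]
    exact hgl
  · have : (j : ℕ) ≠ N - 1 := fun h' => h (if_pos h')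
    rw [if_neg this]

namespace Polynomial

section Semiring

variable {R : Type*} [Semiring R]

theorem coeff_taylor_eq_sum (D : ℕ) {q : R[X]} (hq : q.natDegree ≤ D) (t : R) (s : ℕ) :
    (taylor t q).coeff s = ∑ l ∈ Finset.range (D + 1), q.coeff l * ((X + C t) ^ l).coeff s := by
  conv_lhs => rw [q.as_sum_range' (D + 1) (Nat.lt_succ_of_le hq)]
  simp [taylor_monomial, coeff_C_mul]

theorem coeff_X_add_C_pow_of_lt (t : R) {k s : ℕ} (h : k < s) : ((X + C t) ^ k).coeff s = 0 := by
  rw [coeff_X_add_C_pow, Nat.choose_eq_zero_of_lt h, Nat.cast_zero, mul_zero]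

theorem coeff_X_add_C_pow_self (t : R) (k : ℕ) : ((X + C t) ^ k).coeff k = 1 := by
  rw [coeff_X_add_C_pow, Nat.choose_self, Nat.sub_self, pow_zero, Nat.cast_one, one_mul]

end Semiring

variable {R S : Type*} [CommRing R] [CommRing S]

noncomputable def detPolMatrix {N : ℕ} (D : ℕ) (p : Fin N → R[X]) :
    Matrix (Fin N) (Fin N) R[X] :=
  Matrix.of fun i j => if (j : ℕ) = N - 1 then p i else C ((p i).coeff (D - j))

noncomputable def detPol {N : ℕ} (D : ℕ) (p : Fin N → R[X]) : R[X] :=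
  (detPolMatrix D p).det

variable {N : ℕ} (D : ℕ) (p : Fin N → R[X])

theorem detPol_map (φ : R →+* S) : (detPol D p).map φ = detPol D fun i => (p i).map φ := by
  rw [detPol, detPol, ← coe_mapRingHom, RingHom.map_det]
  congr 1
  ext i j : 1
  simp only [detPolMatrix, RingHom.mapMatrix_apply, Matrix.map_apply, Matrix.of_apply]
  split_ifs <;> simp [coeff_map]

theorem detPolMatrix_mulVec (A : Matrix (Fin N) (Fin N) R) :
    detPolMatrix D (A.map C *ᵥ p) = A.map C * detPolMatrix D p := by
  ext i j : 1
  simp only [detPolMatrix, Matrix.of_apply, Matrix.mul_apply, Matrix.mulVec, dotProduct,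
    Matrix.map_apply]
  split_ifs
  · rfl
  · simp [finsetSum_coeff, coeff_C_mul]

theorem detPol_mulVec (A : Matrix (Fin N) (Fin N) R) :
    detPol D (A.map C *ᵥ p) = C A.det * detPol D p := by
  rw [detPol, detPolMatrix_mulVec, Matrix.det_mul, RingHom.map_det]
  rfl

noncomputable def taylorColMatrix (N D : ℕ) (t : R) : Matrix (Fin N) (Fin N) R :=
  Matrix.of fun j' j => if (j' : ℕ) = N - 1 ∨ (j : ℕ) = N - 1 then (1 : Matrix _ _ R) j' j
    else ((X + C t) ^ (D - j')).coeff (D - j)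

theorem det_taylorColMatrix (t : R) (hN : N ≤ D + 2) : (taylorColMatrix N D t).det = 1 := by
  have hupper : (taylorColMatrix N D t).IsUpperTriangular := by
    intro j' j (hj : j < j')
    simp only [taylorColMatrix, Matrix.of_apply, Matrix.one_apply_ne (ne_of_gt hj)]
    split_ifs with hlast
    · rfl
    · exact coeff_X_add_C_pow_of_lt t (by omega)
  rw [Matrix.det_of_isUpperTriangular hupper]
  refine Finset.prod_eq_one fun j _ => ?_
  simp only [taylorColMatrix, Matrix.of_apply, Matrix.one_apply_eq, coeff_X_add_C_pow_self,
    ite_self]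

theorem detPolMatrix_taylor (t : R) (hp : ∀ i, (p i).natDegree ≤ D) (hN : N ≤ D + 2) :
    detPolMatrix D (fun i => taylor t (p i))
      = (detPolMatrix D p).map (taylor t) * (taylorColMatrix N D t).map C := by
  ext i j : 1
  simp only [detPolMatrix, taylorColMatrix, Matrix.mul_apply, Matrix.map_apply, Matrix.of_apply]
  by_cases hj : (j : ℕ) = N - 1
  · simp [hj, Matrix.one_apply]
  · rw [if_neg hj, coeff_taylor_eq_sum D (hp i), map_sum, ← sum_fin_rev_eq_sum_range _
      (fun l hl => by rw [coeff_X_add_C_pow_of_lt t hl, mul_zero, map_zero]) hN (by omega)]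
    refine Finset.sum_congr rfl fun j' _ => ?_
    by_cases hj' : (j' : ℕ) = N - 1
    · simp [hj', hj, Matrix.one_apply, Fin.ext_iff]; omega
    · simp [hj', hj, taylor_C]

theorem detPol_taylor (t : R) (hp : ∀ i, (p i).natDegree ≤ D) (hN : N ≤ D + 2) :
    detPol D (fun i => taylor t (p i)) = taylor t (detPol D p) := by
  rw [detPol, detPolMatrix_taylor D p t hp hN, Matrix.det_mul, ← RingHom.mapMatrix_apply,
    ← RingHom.map_det, det_taylorColMatrix D t hN, map_one, mul_one, detPol]
  exact (RingHom.map_det (taylorAlgHom t).toRingHom _).symm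

end Polynomial

namespace Sres

variable {R : Type*} [CommRing R] (m n d : ℕ)

def rowExp (i : ℕ) : ℕ :=
  if i < n - d then n - d - 1 - i else m - d - 1 - (i - (n - d))

noncomputable def row (f g : R[X]) (i : ℕ) : R[X] :=
  X ^ rowExp m n d i * if i < n - d then f else g

noncomputable def taylorRowMatrix (t : R) :
    Matrix (Fin (m + n - 2 * d)) (Fin (m + n - 2 * d)) R :=
  Matrix.of fun i i' => if ((i : ℕ) < n - d ↔ (i' : ℕ) < n - d) then
    ((X + C t) ^ rowExp m n d i).coeff (rowExp m n d i') else 0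

theorem det_taylorRowMatrix (t : R) : (taylorRowMatrix m n d t).det = 1 := by
  have hupper : (taylorRowMatrix m n d t).IsUpperTriangular := by
    intro i i' (hi' : i' < i)
    simp only [taylorRowMatrix, Matrix.of_apply]
    split_ifs with hblock
    · refine coeff_X_add_C_pow_of_lt t ?_
      simp only [rowExp, Fin.lt_def] at hi' ⊢
      split_ifs <;> omega
    · rfl
  rw [Matrix.det_of_isUpperTriangular hupper]
  refine Finset.prod_eq_one fun i _ => ?_
  simp only [taylorRowMatrix, Matrix.of_apply, iff_self, if_true, coeff_X_add_C_pow_self]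

theorem X_add_C_pow_eq_sum_taylorRowMatrix (hm : d ≤ m) (hn : d ≤ n) (t : R)
    (i : Fin (m + n - 2 * d)) :
    (X + C t) ^ rowExp m n d i
      = ∑ i', C (taylorRowMatrix m n d t i i') * X ^ rowExp m n d i' := by
  have hdeg : ((X + C t) ^ rowExp m n d i).natDegree < rowExp m n d i + 1 :=
    Nat.lt_succ_of_le ((natDegree_pow_le_of_le _ (natDegree_add_C.trans_le natDegree_X_le)).trans
      (mul_one _).le)
  conv_lhs => rw [as_sum_range_C_mul_X_pow' _ hdeg]
  symm
  have same_block : ∀ i', C (taylorRowMatrix m n d t i i') * X ^ rowExp m n d i' ≠ 0 →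
      ((i : ℕ) < n - d ↔ (i' : ℕ) < n - d) := fun i' h => by
    by_contra hne
    simp [taylorRowMatrix, hne] at h
  refine Finset.sum_bij_ne_zero (fun i' _ _ => rowExp m n d i') (fun i' _ h => ?_)
    (fun i₁ _ h₁ i₂ _ h₂ heq => ?_) (fun b hb hcb => ?_) (fun i' _ h => ?_)
  · rw [Finset.mem_range]
    by_contra hlt
    apply h
    rw [taylorRowMatrix, Matrix.of_apply, if_pos (same_block i' h),
      coeff_X_add_C_pow_of_lt t (not_lt.mp hlt), C_0, zero_mul]
  · have h₁ := same_block i₁ h₁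
    have h₂ := same_block i₂ h₂
    simp only [rowExp] at heq
    exact Fin.ext (by split_ifs at heq <;> omega)
  · have hb := Finset.mem_range.mp hb
    simp only [rowExp] at hb
    let i' : Fin (m + n - 2 * d) :=
      ⟨if (i : ℕ) < n - d then n - d - 1 - b else n - d + (m - d - 1 - b),
        by split_ifs at hb ⊢ <;> omega⟩
    have hblock : (i : ℕ) < n - d ↔ (i' : ℕ) < n - d := by simp only [i']; split_ifs <;> omega
    have hexp : rowExp m n d i' = b := by simp only [rowExp, i']; split_ifs at hb ⊢ <;> omega
    refine ⟨i', Finset.mem_univ _, ?_, hexp⟩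
    simpa [taylorRowMatrix, hblock, hexp] using hcb
  · simp [taylorRowMatrix, same_block i' h]

theorem taylor_row (hm : d ≤ m) (hn : d ≤ n) (t : R) (f g : R[X])
    (i : Fin (m + n - 2 * d)) :
    taylor t (row m n d f g i) = ((taylorRowMatrix m n d t).map C *ᵥ
      fun i' : Fin (m + n - 2 * d) => row m n d (taylor t f) (taylor t g) i') i := by
  have hterm : ∀ i', C (taylorRowMatrix m n d t i i') * row m n d (taylor t f) (taylor t g) i'
      = C (taylorRowMatrix m n d t i i') * X ^ rowExp m n d i'
        * if (i : ℕ) < n - d then taylor t f else taylor t g := fun i' => by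
    by_cases hblock : (i : ℕ) < n - d ↔ (i' : ℕ) < n - d
    · rw [row, mul_assoc, if_congr hblock.symm rfl rfl]
    · simp [taylorRowMatrix, hblock]
  simp only [Matrix.mulVec, dotProduct, Matrix.map_apply, hterm, ← Finset.sum_mul,
    ← X_add_C_pow_eq_sum_taylorRowMatrix m n d hm hn]
  rw [row, taylor_mul, taylor_X_pow, apply_ite (taylor t)]

theorem natDegree_row_le (hm : d < m) {f g : R[X]} (hf : f.natDegree ≤ m)
    (hg : g.natDegree ≤ n) (i : ℕ) : (row m n d f g i).natDegree ≤ m + n - d - 1 := by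
  refine natDegree_mul_le.trans ?_
  rw [rowExp]
  split_ifs
  · have := natDegree_X_pow_le (R := R) (n - d - 1 - i); omega
  · have := natDegree_X_pow_le (R := R) (m - d - 1 - (i - (n - d))); omega

end Sres

section

variable {R S : Type*} [CommRing R] [CommRing S] (m n d : ℕ)

theorem Sres_eq_detPol (f g : R[X]) :
    Sres m n d f g
      = detPol (m + n - d - 1) fun i : Fin (m + n - 2 * d) => Sres.row m n d f g i := by
  rw [Sres, detPol]
  congr 1
  ext i j : 1
  simp only [detPolMatrix, Sres.row, Sres.rowExp, Matrix.of_apply]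
  split_ifs <;> try rfl
  all_goals
    rw [coeff_X_pow_mul']
    split_ifs <;> first | rfl | exact C_0.symm | (congr 2; omega)

theorem Sres_map (φ : R →+* S) (f g : R[X]) :
    Sres m n d (f.map φ) (g.map φ) = (Sres m n d f g).map φ := by
  simp only [Sres_eq_detPol, detPol_map, Sres.row, Polynomial.map_mul, Polynomial.map_pow, map_X,
    apply_ite (Polynomial.map φ)]

theorem Sres_taylor (hm : d < m) (hn : d ≤ n) {f g : R[X]} (hf : f.natDegree ≤ m)
    (hg : g.natDegree ≤ n) (t : R) :
    Sres m n d (taylor t f) (taylor t g) = taylor t (Sres m n d f g) := by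
  rw [Sres_eq_detPol, Sres_eq_detPol, ← detPol_taylor _ _ t
    (fun i => Sres.natDegree_row_le m n d hm hf hg i) (by omega)]
  simp only [Sres.taylor_row m n d hm.le hn, detPol_mulVec, Sres.det_taylorRowMatrix, map_one,
    one_mul]

theorem Sres_eq_map_coeff_zero (hm : d < m) (hn : d ≤ n) {f g : R[X]} (hf : f.natDegree ≤ m)
    (hg : g.natDegree ≤ n) (φ : R →+* R[X]) (hφf : f.map φ = taylor X (f.map C))
    (hφg : g.map φ = taylor X (g.map C)) :
    Sres m n d f g = φ ((Sres m n d f g).coeff 0) :=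
  calc Sres m n d f g = ((Sres m n d f g).map C).eval X := by rw [eval_map, eval₂_C_X]
    _ = (taylor X ((Sres m n d f g).map C)).coeff 0 := (taylor_coeff_zero _ _).symm
    _ = (Sres m n d (f.map φ) (g.map φ)).coeff 0 := by
      rw [hφf, hφg, Sres_taylor m n d hm hn (natDegree_map_le.trans hf)
        (natDegree_map_le.trans hg), Sres_map]
    _ = φ ((Sres m n d f g).coeff 0) := by rw [Sres_map, coeff_map]

end

theorem subresultant_mem_shifted_subring (m n d : ℕ) (hd : d < min m n) :
    ∃ q : MvPolynomial (Fin 2) ℤ,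
      MvPolynomial.aeval
        ![X - C (MvPolynomial.X 0), X - C (MvPolynomial.X 1)] q
        = Sres m n d
            ((X - C (MvPolynomial.X 0 : MvPolynomial (Fin 2) ℤ)) ^ m)
            ((X - C (MvPolynomial.X 1 : MvPolynomial (Fin 2) ℤ)) ^ n) := by
  obtain ⟨hm, hn⟩ := lt_min_iff.mp hd
  let φ : MvPolynomial (Fin 2) ℤ →+* (MvPolynomial (Fin 2) ℤ)[X] :=
    (MvPolynomial.aeval ![C (MvPolynomial.X 0) - X, C (MvPolynomial.X 1) - X]).toRingHom
  have hdeg (i : Fin 2) (k : ℕ) :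
      ((X - C (MvPolynomial.X i : MvPolynomial (Fin 2) ℤ)) ^ k).natDegree ≤ k :=
    (natDegree_pow_le_of_le k (natDegree_X_sub_C_le _)).trans (mul_one k).le
  have hshift (i : Fin 2) (k : ℕ) :
      ((X - C (MvPolynomial.X i : MvPolynomial (Fin 2) ℤ)) ^ k).map φ
        = taylor X (((X - C (MvPolynomial.X i : MvPolynomial (Fin 2) ℤ)) ^ k).map C) := by
    rw [Polynomial.map_pow, Polynomial.map_pow, Polynomial.map_sub, Polynomial.map_sub, map_X,
      map_X, map_C, map_C, taylor_pow, taylor_apply, sub_comp, X_comp, C_comp]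
    fin_cases i <;> simp [φ] <;> ring
  refine ⟨MvPolynomial.bind₁ ![-MvPolynomial.X 0, -MvPolynomial.X 1]
    ((Sres m n d ((X - C (MvPolynomial.X 0)) ^ m) ((X - C (MvPolynomial.X 1)) ^ n)).coeff 0), ?_⟩
  rw [MvPolynomial.aeval_bind₁]
  conv_rhs => rw [Sres_eq_map_coeff_zero m n d hm hn.le (hdeg 0 m) (hdeg 1 n) φ
    (hshift 0 m) (hshift 1 n)]
  show MvPolynomial.aeval _ _ = MvPolynomial.aeval _ _
  congr 2
  funext i
  fin_cases i <;> simp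
end

section
/- For α ≠ β in a field K of characteristic 0, and natural numbers m, n, d with 0 ≤ d < min(m,n), the leading coefficient (coefficient of x^d) of the polynomial ∑_{j=0}^{d} C(n-d+j-1, j)·C(m-j-1, d-j)·(x-α)^j·(x-β)^(d-j) equals C(m+n-d-1, d). -/
/-!
Each product `(X - α)^j (X - β)^(d-j)` is monic of degree `d`, so the coefficient of `X^d` is the
sum of the scalar weights. With `a = n - d - 1` and `b = m - d - 1` these are
`C(a+j, j) C(b+d-j, d-j)`, the convolution of the coefficients of `(1 - t)^-(a+1)` and
`(1 - t)^-(b+1)`; their product is `(1 - t)^-(a+b+2)`, whose `t^d`-coefficient is `C(a+b+1+d, d)`.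
-/

open Polynomial Finset

theorem Nat.sum_antidiagonal_add_choose_mul_add_choose (a b d : ℕ) :
    ∑ ij ∈ antidiagonal d, (a + ij.1).choose ij.1 * (b + ij.2).choose ij.2
      = (a + b + 1 + d).choose d := by
  have h := congrArg (fun f : (PowerSeries ℤ)ˣ => PowerSeries.coeff d f.val)
    (PowerSeries.invOneSubPow_add ℤ (a + 1) (b + 1))
  simp only [Units.val_mul, PowerSeries.coeff_mul,
    PowerSeries.invOneSubPow_val_succ_eq_mk_add_choose, PowerSeries.coeff_mk,
    show a + 1 + (b + 1) = a + b + 1 + 1 by ring] at h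
  rw [Nat.choose_symm_add] at h
  simp only [← Nat.choose_symm_add]
  exact_mod_cast h.symm

theorem Polynomial.coeff_X_sub_C_pow_mul_X_sub_C_pow {R : Type*} [Ring R] (a b : R) (j k : ℕ) :
    ((X - C a) ^ j * (X - C b) ^ k).coeff (j + k) = 1 := by
  nontriviality R
  have ha := (monic_X_sub_C a).pow j
  have hb := (monic_X_sub_C b).pow k
  have hdeg : ((X - C a) ^ j * (X - C b) ^ k).natDegree = j + k := by
    rw [ha.natDegree_mul hb, (monic_X_sub_C a).natDegree_pow, (monic_X_sub_C b).natDegree_pow,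
      natDegree_X_sub_C, natDegree_X_sub_C, mul_one, mul_one]
  rw [← hdeg]
  exact (ha.mul hb).coeff_natDegree

theorem leading_coeff_of_bernstein_sum_general {K : Type*} [Field K]
    (α β : K) (m n d : ℕ) (hm : d < m) (hn : d < n) :
    (∑ j ∈ Finset.range (d + 1),
      C ((Nat.choose (n - d + j - 1) j : K) * (Nat.choose (m - j - 1) (d - j) : K)) *
        (X - C α) ^ j * (X - C β) ^ (d - j)).coeff d
      = (Nat.choose (m + n - d - 1) d : K) := by
  have hterm : ∀ j ∈ range (d + 1),
      (C ((Nat.choose (n - d + j - 1) j : K) * (Nat.choose (m - j - 1) (d - j) : K)) *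
        (X - C α) ^ j * (X - C β) ^ (d - j)).coeff d
      = (((n - d - 1 + j).choose j * (m - d - 1 + (d - j)).choose (d - j) : ℕ) : K) := by
    intro j hj
    have hjd : j + (d - j) = d := by grind
    have hleading : ((X - C α) ^ j * (X - C β) ^ (d - j)).coeff d = 1 := by
      simpa only [hjd] using coeff_X_sub_C_pow_mul_X_sub_C_pow α β j (d - j)
    rw [mul_assoc, coeff_C_mul, hleading, mul_one, Nat.cast_mul,
      show n - d + j - 1 = n - d - 1 + j by omega, show m - j - 1 = m - d - 1 + (d - j) by omega]
  rw [finsetSum_coeff, sum_congr rfl hterm, ← Nat.cast_sum,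
    ← Nat.sum_antidiagonal_eq_sum_range_succ
      (fun i j => (n - d - 1 + i).choose i * (m - d - 1 + j).choose j),
    Nat.sum_antidiagonal_add_choose_mul_add_choose,
    show n - d - 1 + (m - d - 1) + 1 + d = m + n - d - 1 by omega]

theorem leading_coeff_of_bernstein_sum {K : Type*} [Field K] [CharZero K]
    (α β : K) (hαβ : α ≠ β) (m n d : ℕ) (hm : d < m) (hn : d < n) :
    (∑ j ∈ Finset.range (d + 1),
      C ((Nat.choose (n - d + j - 1) j : K) * (Nat.choose (m - j - 1) (d - j) : K)) *
        (X - C α) ^ j * (X - C β) ^ (d - j)).coeff d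
      = (Nat.choose (m + n - d - 1) d : K) :=
  leading_coeff_of_bernstein_sum_general α β m n d hm hn
end

section
/- Let m, n, d be natural numbers with 1 ≤ d < min(m,n) and suppose p := m+n-d-1 is prime. Then p divides the integer ∏_{i=1}^{d} (i-1)!·(m+n-d-i)! / ((m-i)!·(n-i)!). -/
/-! Clearing denominators gives `z * D = N`, where `N` contains the factor `(m + n - d - 1)! = p!`
(the `i = 1` term), while every factorial in `D` has argument `≤ max m n - 1 < p`, so `p ∤ D`. -/

open Nat Finset

theorem Int.dvd_of_cast_eq_div_of_prime {p z N D : ℤ} (hp : Prime p) (hz : (z : ℚ) = N / D)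
    (hN : p ∣ N) (hD : ¬ p ∣ D) : p ∣ z := by
  have hD0 : (D : ℚ) ≠ 0 := by
    rintro h
    exact hD (by simp [Int.cast_eq_zero.mp h])
  have hzD : z * D = N := by
    exact_mod_cast (eq_div_iff hD0).mp hz
  exact (hp.dvd_or_dvd (hzD ▸ hN)).resolve_right hD

theorem Nat.Prime.not_dvd_prod_factorial_mul_factorial {ι : Type*} {p : ℕ} (hp : p.Prime)
    {s : Finset ι} {a b : ι → ℕ} (h : ∀ i ∈ s, a i < p ∧ b i < p) :
    ¬ p ∣ ∏ i ∈ s, (a i)! * (b i)! := by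
  rw [Prime.dvd_finsetProd_iff hp.prime]
  rintro ⟨i, hi, hdvd⟩
  rcases hp.dvd_mul.mp hdvd with ha | hb
  · exact (h i hi).1.not_ge (hp.dvd_factorial.mp ha)
  · exact (h i hi).2.not_ge (hp.dvd_factorial.mp hb)

theorem prime_divides_principal_subresultant_product (m n d : ℕ)
    (hd : 1 ≤ d) (hm : d < m) (hn : d < n) (hp : (m + n - d - 1).Prime) :
    ∀ z : ℤ,
      (z : ℚ) = ∏ i ∈ Finset.Icc 1 d,
        ((i - 1).factorial * (m + n - d - i).factorial : ℚ) /
        ((m - i).factorial * (n - i).factorial) →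
      ((m + n - d - 1 : ℕ) : ℤ) ∣ z := by
  intro z hz
  rw [prod_div_distrib] at hz
  refine Int.dvd_of_cast_eq_div_of_prime (Nat.prime_iff_prime_int.mp hp)
    (N := ((∏ i ∈ Icc 1 d, (i - 1)! * (m + n - d - i)! : ℕ) : ℤ))
    (D := ((∏ i ∈ Icc 1 d, (m - i)! * (n - i)! : ℕ) : ℤ)) (by push_cast; exact hz) ?_ ?_
  · have hp_dvd_first : m + n - d - 1 ∣ (1 - 1)! * (m + n - d - 1)! :=
      (dvd_factorial hp.pos le_rfl).mul_left _
    exact Int.natCast_dvd_natCast.mpr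
      (hp_dvd_first.trans (dvd_prod_of_mem _ (mem_Icc.mpr ⟨le_rfl, hd⟩)))
  · rw [Int.natCast_dvd_natCast]
    exact hp.not_dvd_prod_factorial_mul_factorial fun i hi => by
      have := mem_Icc.mp hi
      omega
end

section
/- For a field K, f, g ∈ K[x], d ≥ 0, α ∈ K, and γ ∈ K nonzero with deg f = m, deg g = n, d < min(m,n): Sres_d(f(x-α), g(x-α)) = (Sres_d(f,g))(x-α), and Sres_d(f(γx), g(γx)) = γ^(mn - d(d+1)) · (Sres_d(f,g))(γx). -/
open Polynomial

/-!
Both identities are instances of one: if `q` has degree one and leading coefficient `a`, then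
`Sres_d(f ∘ q, g ∘ q) = a ^ (mn - d(d+1)) · Sres_d(f, g) ∘ q`.
The subresultant is the determinant of a matrix whose rows hold top coefficients of the
polynomials `X^e f`, `X^e g` and, in the last column, these polynomials themselves. Composing the
last column with `q` and recomputing the coefficient columns is an upper triangular column
operation, which multiplies the determinant by `a^k` for each column holding the coefficient of
`X^k`. On the other hand `(X^e f) ∘ q = q^e · (f ∘ q)`, and expanding `q^e` in powers of `X` is an
upper triangular row operation on the rows `X^e' · (f ∘ q)`, which multiplies the determinant by
`a^e` for each row. The two exponents differ by `mn - d(d+1)`.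
-/

open Finset Matrix

section

variable {R : Type*} [CommRing R]

noncomputable def detPoly (S N : ℕ) (p : Fin S → R[X]) : R[X] :=
  (Matrix.of fun i j : Fin S =>
    if (j : ℕ) = S - 1 then p i else C ((p i).coeff (N - 1 - j))).det

lemma detPoly_mulVec (S N : ℕ) (A : Matrix (Fin S) (Fin S) R) (p : Fin S → R[X]) :
    detPoly S N (A.map C *ᵥ p) = C A.det * detPoly S N p := by
  rw [detPoly, detPoly, RingHom.map_det, ← Matrix.det_mul]
  congr 1
  ext i j : 1
  simp only [of_apply, mul_apply, RingHom.mapMatrix_apply, map_apply, mulVec, dotProduct]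
  split_ifs
  · rfl
  · simp only [finsetSum_coeff, coeff_C_mul, map_sum, C_mul]

lemma coeff_comp_eq_sum_range {p : R[X]} (q : R[X]) {N : ℕ} (hp : p.natDegree < N) (s : ℕ) :
    (p.comp q).coeff s = ∑ t ∈ range N, p.coeff t * (q ^ t).coeff s := by
  simp only [Polynomial.comp, eval₂_eq_sum_range' C hp, finsetSum_coeff, coeff_C_mul]

lemma coeff_pow_eq_zero_of_lt {q : R[X]} (hq : q.natDegree ≤ 1) {t s : ℕ} (h : t < s) :
    (q ^ t).coeff s = 0 :=
  coeff_eq_zero_of_natDegree_lt <| natDegree_pow_le.trans_lt <| by nlinarith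

lemma coeff_pow_self {q : R[X]} (hq : q.natDegree ≤ 1) (t : ℕ) :
    (q ^ t).coeff t = q.coeff 1 ^ t := by
  simpa using coeff_pow_of_natDegree_le (m := t) hq

lemma coeff_comp_eq_sum_top {p q : R[X]} (hq : q.natDegree ≤ 1) {S N : ℕ} (hSN : S ≤ N)
    (hp : p.natDegree < N) {j : ℕ} (hj : j < S - 1) :
    (p.comp q).coeff (N - 1 - j) =
      ∑ u ∈ range (S - 1), p.coeff (N - 1 - u) * (q ^ (N - 1 - u)).coeff (N - 1 - j) := by
  rw [coeff_comp_eq_sum_range q hp, ← sum_range_reflect]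
  refine (sum_subset (range_subset_range.2 (by omega)) fun u hu hu' => ?_).symm
  rw [mem_range] at hu hu'
  rw [coeff_pow_eq_zero_of_lt hq (by omega), mul_zero]

lemma Fin.sum_univ_ite_mem {M : Type*} [AddCommMonoid M] {S : ℕ} {s : Finset ℕ}
    (hs : s ⊆ range S) (f : ℕ → M) :
    ∑ j : Fin S, (if (j : ℕ) ∈ s then f j else 0) = ∑ u ∈ s, f u := by
  rw [Fin.sum_univ_eq_sum_range (fun u => if u ∈ s then f u else 0), sum_ite_mem,
    inter_eq_right.2 hs]

lemma sum_Ico_C_coeff_mul_X_pow_reflect (h : R[X]) {a b : ℕ} (hab : a ≤ b)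
    (hh : h.natDegree < b - a) :
    ∑ u ∈ Ico a b, C (h.coeff (b - 1 - u)) * X ^ (b - 1 - u) = h := by
  rw [sum_Ico_reflect (fun s => C (h.coeff s) * X ^ s) a (by omega),
    show b - 1 + 1 - b = 0 by omega, show b - 1 + 1 - a = b - a by omega, ← range_eq_Ico,
    ← as_sum_range_C_mul_X_pow' h hh]

noncomputable def compColumnMatrix (S N : ℕ) (q : R[X]) : Matrix (Fin S) (Fin S) R[X] :=
  of fun j' j => if (j : ℕ) < S - 1 then
      (if (j' : ℕ) < S - 1 then C ((q ^ (N - 1 - j')).coeff (N - 1 - j)) else 0)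
    else if j' = j then 1 else 0

lemma det_compColumnMatrix {q : R[X]} (hq : q.natDegree ≤ 1) {S N : ℕ} (hSN : S ≤ N) :
    (compColumnMatrix S N q).det = C (q.coeff 1 ^ ∑ j ∈ range (S - 1), (N - 1 - j)) := by
  rw [det_of_isUpperTriangular]
  · simp only [compColumnMatrix, of_apply, if_true]
    rw [← Fin.sum_univ_ite_mem (range_subset_range.2 (Nat.sub_le S 1)), ← prod_pow_eq_pow_sum,
      map_prod]
    refine prod_congr rfl fun j _ => ?_
    simp only [mem_range]
    split_ifs <;> simp [coeff_pow_self hq]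
  · intro j' j hj
    have hj : (j : ℕ) < j' := hj
    simp only [compColumnMatrix, of_apply]
    split_ifs with h1 h2 h3
    · rw [coeff_pow_eq_zero_of_lt hq (by omega), C_0]
    · rfl
    · exact absurd h3 (Fin.ne_of_gt hj)
    · rfl

lemma detPoly_comp {q : R[X]} (hq : q.natDegree ≤ 1) {S N : ℕ} (hSN : S ≤ N)
    {p : Fin S → R[X]} (hp : ∀ i, (p i).natDegree < N) :
    detPoly S N (fun i => (p i).comp q) =
      C (q.coeff 1 ^ ∑ j ∈ range (S - 1), (N - 1 - j)) * (detPoly S N p).comp q := by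
  have hmul : (of fun i j : Fin S => if (j : ℕ) = S - 1 then (p i).comp q
        else C (((p i).comp q).coeff (N - 1 - j))) =
      (compRingHom q).mapMatrix (of fun i j : Fin S =>
        if (j : ℕ) = S - 1 then p i else C ((p i).coeff (N - 1 - j))) *
      compColumnMatrix S N q := by
    ext i j : 1
    simp only [of_apply, mul_apply, RingHom.mapMatrix_apply, map_apply, compColumnMatrix]
    by_cases hj : (j : ℕ) = S - 1
    · simp only [hj, lt_irrefl, if_false, if_true, mul_ite, mul_one, mul_zero, sum_ite_eq',
        mem_univ]
      rfl
    · have hj' : (j : ℕ) < S - 1 := by omega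
      simp only [hj, hj', if_false, if_true, mul_ite, mul_zero]
      rw [coeff_comp_eq_sum_top hq hSN (hp i) hj', map_sum,
        ← Fin.sum_univ_ite_mem (range_subset_range.2 (Nat.sub_le S 1))]
      refine sum_congr rfl fun j' _ => ?_
      simp only [mem_range]
      split_ifs with h h'
      · omega
      · rw [coe_compRingHom_apply, C_comp, C_mul]
      · rfl
  rw [detPoly, hmul, det_mul, det_compColumnMatrix hq hSN, mul_comm, detPoly, ← RingHom.map_det]
  rfl

section Subresultant

variable (m n d : ℕ)

def sresExp (i : ℕ) : ℕ := if i < n - d then n - d - 1 - i else m + n - 2 * d - 1 - i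

noncomputable def sresRow (f g : R[X]) (i : Fin (m + n - 2 * d)) : R[X] :=
  X ^ sresExp m n d i * if (i : ℕ) < n - d then f else g

lemma Sres_eq_detPoly (hn : d ≤ n) (f g : R[X]) :
    Sres m n d f g = detPoly (m + n - 2 * d) (m + n - d) (sresRow m n d f g) := by
  rw [Sres, detPoly]
  congr 1
  ext i j : 1
  have hi := i.isLt
  have hj := j.isLt
  simp only [of_apply, sresRow, sresExp]
  by_cases hin : (i : ℕ) < n - d <;> by_cases hjl : (j : ℕ) = m + n - 2 * d - 1 <;>
    simp only [hin, hjl, if_true, if_false, coeff_X_pow_mul']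
  · rw [apply_ite C, C_0]
    split_ifs <;> first | omega | rfl | (congr 2; omega)
  · congr 2
    omega
  · rw [apply_ite C, C_0]
    split_ifs <;> first | omega | rfl | (congr 2; omega)

noncomputable def sresRowMatrix (q : R[X]) :
    Matrix (Fin (m + n - 2 * d)) (Fin (m + n - 2 * d)) R :=
  of fun i i' => if ((i : ℕ) < n - d ↔ (i' : ℕ) < n - d) then
    (q ^ sresExp m n d i).coeff (sresExp m n d i') else 0

lemma det_sresRowMatrix {q : R[X]} (hq : q.natDegree ≤ 1) :
    (sresRowMatrix m n d q).det = q.coeff 1 ^ ∑ i ∈ range (m + n - 2 * d), sresExp m n d i := by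
  rw [det_of_isUpperTriangular]
  · simp only [sresRowMatrix, of_apply, iff_self, if_true, coeff_pow_self hq]
    rw [prod_pow_eq_pow_sum, Fin.sum_univ_eq_sum_range (sresExp m n d)]
  · intro i i' hlt
    have hlt : (i' : ℕ) < i := hlt
    have hi := i.isLt
    simp only [sresRowMatrix, of_apply]
    split_ifs with hblock
    · exact coeff_pow_eq_zero_of_lt hq (by simp only [sresExp]; split_ifs <;> omega)
    · rfl

lemma exists_Ico_sresBlock (hm : d ≤ m) (hn : d ≤ n) (i : Fin (m + n - 2 * d)) :
    ∃ a b, (∀ i' : Fin (m + n - 2 * d),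
      ((i : ℕ) < n - d ↔ (i' : ℕ) < n - d) ↔ (i' : ℕ) ∈ Ico a b) ∧
      (∀ u ∈ Ico a b, sresExp m n d u = b - 1 - u) ∧
      a ≤ i ∧ i < b ∧ b ≤ m + n - 2 * d := by
  have hi := i.isLt
  by_cases hin : (i : ℕ) < n - d
  · refine ⟨0, n - d, fun i' => ?_, fun u hu => ?_, by omega, hin, by omega⟩
    · simp only [mem_Ico, hin, true_iff]
      omega
    · simp only [sresExp, if_pos (mem_Ico.1 hu).2]
  · refine ⟨n - d, m + n - 2 * d, fun i' => ?_, fun u hu => ?_, by omega, hi, le_rfl⟩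
    · have := i'.isLt
      simp only [mem_Ico, hin, false_iff, not_lt]
      omega
    · simp only [sresExp, if_neg (not_lt.2 (mem_Ico.1 hu).1)]

lemma sresRow_comp {q : R[X]} (hq : q.natDegree ≤ 1) (hm : d ≤ m) (hn : d ≤ n) (f g : R[X]) :
    (fun i => (sresRow m n d f g i).comp q) =
      (sresRowMatrix m n d q).map C *ᵥ sresRow m n d (f.comp q) (g.comp q) := by
  funext i
  obtain ⟨a, b, hblock, hexp, hab, hbS⟩ := exists_Ico_sresBlock m n d hm hn i
  set F := if (i : ℕ) < n - d then f.comp q else g.comp q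
  have hrow : ∀ i', C (sresRowMatrix m n d q i i') * sresRow m n d (f.comp q) (g.comp q) i' =
      (if (i' : ℕ) ∈ Ico a b then
        C ((q ^ sresExp m n d i).coeff (b - 1 - i')) * X ^ (b - 1 - i') else 0) * F := by
    intro i'
    by_cases h : (i : ℕ) < n - d ↔ (i' : ℕ) < n - d
    · have hmem := (hblock i').1 h
      simp only [sresRowMatrix, sresRow, of_apply, if_pos hmem, hexp _ hmem, F, ← h, if_true,
        mul_assoc]
    · simp only [sresRowMatrix, of_apply, if_neg h, if_neg (mt (hblock i').2 h), C_0, zero_mul]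
  have hdeg : (q ^ sresExp m n d i).natDegree < b - a := by
    have := hexp i (mem_Ico.2 ⟨hab, hbS.1⟩)
    calc _ ≤ sresExp m n d i * q.natDegree := natDegree_pow_le
      _ ≤ sresExp m n d i := mul_le_of_le_one_right' hq
      _ < b - a := by omega
  calc (sresRow m n d f g i).comp q = q ^ sresExp m n d i * F := by
        simp only [sresRow, mul_comp, X_pow_comp, F]
        split_ifs <;> rfl
    _ = _ := by
        simp only [mulVec, dotProduct, map_apply, hrow, ← sum_mul]
        rw [Fin.sum_univ_ite_mem (f := fun u => C ((q ^ sresExp m n d i).coeff (b - 1 - u)) *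
          X ^ (b - 1 - u)), sum_Ico_C_coeff_mul_X_pow_reflect _ (hab.trans hbS.1.le) hdeg]
        intro u hu
        rw [mem_range]
        exact (mem_Ico.1 hu).2.trans_le hbS.2

lemma sum_sresExp_add (hm : d ≤ m) (hn : d ≤ n) :
    ∑ i ∈ range (m + n - 2 * d), sresExp m n d i + (m * n - d * (d + 1)) =
      ∑ j ∈ range (m + n - 2 * d - 1), (m + n - d - 1 - j) := by
  obtain ⟨a, rfl⟩ := Nat.exists_eq_add_of_le hm
  obtain ⟨b, rfl⟩ := Nat.exists_eq_add_of_le hn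
  rw [show d + a + (d + b) - 2 * d = b + a by omega]
  obtain ⟨s, hs⟩ | ⟨rfl, rfl⟩ : (∃ s, b + a = s + 1) ∨ (b = 0 ∧ a = 0) := by
    rcases Nat.eq_zero_or_pos (b + a) with h | h
    · exact .inr (by omega)
    · exact .inl ⟨b + a - 1, by omega⟩
  · have hrow : ∑ i ∈ range (b + a), sresExp (d + a) (d + b) d i =
        ∑ u ∈ range b, u + ∑ u ∈ range a, u := by
      rw [sum_range_add, ← sum_range_reflect (fun u => u) b, ← sum_range_reflect (fun u => u) a]
      congr 1 <;> refine sum_congr rfl fun u hu => ?_ <;> rw [mem_range] at hu <;>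
        simp only [sresExp] <;> split_ifs <;> omega
    have hcol : ∑ j ∈ range s, (d + a + (d + b) - d - 1 - j) = ∑ j ∈ range s, j + s * (d + 1) :=
      calc _ = ∑ j ∈ range s, ((s - 1 - j) + (d + 1)) :=
            sum_congr rfl fun j hj => by rw [mem_range] at hj; omega
        _ = _ := by
          rw [sum_add_distrib, sum_range_reflect (fun j => j) s, sum_const, card_range, smul_eq_mul]
    have hgauss : ∑ j ∈ range (b + a), j = ∑ u ∈ range b, u + ∑ u ∈ range a, u + a * b := by
      rw [sum_range_add, sum_add_distrib, sum_const, card_range, smul_eq_mul]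
      ring
    have hlast : ∑ j ∈ range (b + a), j = ∑ j ∈ range s, j + s := by
      rw [hs, sum_range_succ]
    have hle : d * (d + 1) ≤ (d + a) * (d + b) := by nlinarith
    rw [hrow, hs, Nat.add_sub_cancel, hcol]
    zify [hle] at hgauss hlast hs ⊢
    linear_combination hlast - hgauss + d * hs
  · simpa using Nat.sub_eq_zero_of_le (by nlinarith)

end Subresultant

theorem Sres_comp [IsDomain R] {q : R[X]} (hq : q.natDegree ≤ 1) (hq1 : q.coeff 1 ≠ 0)
    {m n d : ℕ} (hm : d ≤ m) (hn : d ≤ n) {f g : R[X]} (hf : f.natDegree ≤ m)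
    (hg : g.natDegree ≤ n) :
    Sres m n d (f.comp q) (g.comp q) =
      C (q.coeff 1 ^ (m * n - d * (d + 1))) * (Sres m n d f g).comp q := by
  have hrows : ∀ i, (sresRow m n d f g i).natDegree < m + n - d := by
    intro i
    have hi := i.isLt
    refine natDegree_mul_le.trans_lt ?_
    rw [natDegree_X_pow, sresExp]
    split_ifs <;> omega
  have key := detPoly_comp hq (by omega) hrows
  rw [sresRow_comp m n d hq hm hn, detPoly_mulVec, det_sresRowMatrix m n d hq,
    ← Sres_eq_detPoly m n d hn, ← Sres_eq_detPoly m n d hn, ← sum_sresExp_add m n d hm hn,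
    pow_add, C_mul, mul_assoc] at key
  exact mul_left_cancel₀ (C_ne_zero.2 (pow_ne_zero _ hq1)) key

end

theorem subresultant_change_of_variables {K : Type*} [Field K]
    (f g : Polynomial K) (m n d : ℕ) (hf : f.natDegree = m) (hg : g.natDegree = n)
    (hd : d < min m n) (α γ : K) (hγ : γ ≠ 0) :
    Sres m n d (f.comp (X - C α)) (g.comp (X - C α))
        = (Sres m n d f g).comp (X - C α) ∧
    Sres m n d (f.comp (C γ * X)) (g.comp (C γ * X))
        = C (γ ^ (m * n - d * (d + 1))) * (Sres m n d f g).comp (C γ * X) := by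
  have hm : d ≤ m := (lt_min_iff.1 hd).1.le
  have hn : d ≤ n := (lt_min_iff.1 hd).2.le
  constructor
  · simpa using Sres_comp (natDegree_X_sub_C_le α) (by simp) hm hn hf.le hg.le
  · simpa using Sres_comp (natDegree_C_mul_X γ hγ).le (by simpa using hγ) hm hn hf.le hg.le
end
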